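/- Let (X, 𝕏) be an α-Hölder rough path on ℝⁿ with α ∈ (1/3,1/2], let (Z, Z') be a controlled path with values in U given by Z_t = Z_0 + ∫_0^t a_r dX_r + ∫_0^t b_r d[X]_r, where (a, a') is a controlled path with values in L(ℝⁿ, U) and b ∈ C^α([0,T]; L(ℝⁿ⊗ℝⁿ, U)). Then Z' = a, and for any controlled path (c, c') with values in L(U, W), the substitution rule holds: ∫_0^t c_r d_X Z_r = ∫_0^t c_r a_r dX_r + ∫_0^t c_r b_r d[X]_r, where d_X Z denotes the integral of a controlled path against the controlled path Z (compensated Riemann sums Σ c_u Z_{uv} + (c'_u · Z'_u)𝕏_{uv}), the middle integral is a rough integral, and the last is a Young integral. -/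

import Mathlib

/-! Both germs defining `Z` are coherent of order `3α > 1` (by Chen's relation and the
additivity of the bracket), so the sewing estimate, obtained along dyadic partitions, gives
`Z_t - Z_s = a_s X_{st} + a'_s 𝕏_{st} + b_s [X]_{st} + O(|t - s| ^ (3α))`. This yields `Z' = a`,
and it shows that the germ of `∫ c d_X Z` and the sum of the germs of `∫ c a dX` and
`∫ c b d[X]` differ by `c_u O(|v - u| ^ (3α))`, whose Riemann sums vanish in the limit. -/

open Set Filter

/-- A Riemann-sum limit over partitions of `[s,t]` with mesh tending to zero. -/
def IsPartitionLimit {E : Type*} [NormedAddCommGroup E]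
    (s t : ℝ) (F : ℝ → ℝ → E) (I : E) : Prop :=
  ∀ (p : ℕ → ℕ → ℝ) (k : ℕ → ℕ) (mesh : ℕ → ℝ),
    (∀ n, p n 0 = s) → (∀ n, p n (k n) = t) →
    (∀ n i, i < k n → p n i ≤ p n (i+1)) →
    (∀ n i, i < k n → p n (i+1) - p n i ≤ mesh n) →
    Tendsto mesh atTop (nhds 0) →
    Tendsto (fun n => ∑ i ∈ Finset.range (k n), F (p n i) (p n (i+1)))
      atTop (nhds I)

open Finset Topology

lemma Finset.sum_range_two_mul {M : Type*} [AddCommMonoid M] (f : ℕ → M) (N : ℕ) :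
    ∑ i ∈ range (2 * N), f i = ∑ i ∈ range N, (f (2 * i) + f (2 * i + 1)) := by
  induction N with
  | zero => simp
  | succ N ih =>
    rw [mul_add, mul_one, sum_range_succ, sum_range_succ, sum_range_succ, ih, add_assoc]

section Dyadic

variable {E : Type*} [NormedAddCommGroup E]

noncomputable def dyadic (s t : ℝ) (m i : ℕ) : ℝ := s + i * ((t - s) / 2 ^ m)

noncomputable def dyadicSum (Ξ : ℝ → ℝ → E) (s t : ℝ) (m : ℕ) : E :=
  ∑ i ∈ range (2 ^ m), Ξ (dyadic s t m i) (dyadic s t m (i + 1))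

lemma dyadic_zero (s t : ℝ) (m : ℕ) : dyadic s t m 0 = s := by simp [dyadic]

lemma dyadic_two_pow (s t : ℝ) (m : ℕ) : dyadic s t m (2 ^ m) = t := by
  simp only [dyadic]; push_cast; field_simp; ring

lemma dyadic_succ_sub (s t : ℝ) (m i : ℕ) :
    dyadic s t m (i + 1) - dyadic s t m i = (t - s) / 2 ^ m := by
  simp only [dyadic]; push_cast; ring

lemma dyadic_succ_two_mul (s t : ℝ) (m i : ℕ) :
    dyadic s t (m + 1) (2 * i) = dyadic s t m i := by
  simp only [dyadic]; push_cast; field_simp; ring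

lemma dyadic_succ_two_mul_add_one (s t : ℝ) (m i : ℕ) :
    dyadic s t (m + 1) (2 * i + 1) = (dyadic s t m i + dyadic s t m (i + 1)) / 2 := by
  simp only [dyadic]; push_cast; field_simp; ring

lemma dyadic_mem {s t : ℝ} (hst : s ≤ t) (m : ℕ) {i : ℕ} (hi : i ≤ 2 ^ m) :
    dyadic s t m i ∈ Icc s t := by
  have hi' : (i : ℝ) ≤ 2 ^ m := by exact_mod_cast hi
  have hstep : 0 ≤ (t - s) / 2 ^ m := by have := sub_nonneg.2 hst; positivity
  refine ⟨by simp only [dyadic]; nlinarith, ?_⟩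
  calc dyadic s t m i ≤ s + 2 ^ m * ((t - s) / 2 ^ m) := by simp only [dyadic]; gcongr
    _ = t := by field_simp; ring

lemma dyadic_le_succ {s t : ℝ} (hst : s ≤ t) (m i : ℕ) :
    dyadic s t m i ≤ dyadic s t m (i + 1) := by
  have h := dyadic_succ_sub s t m i
  have : 0 ≤ (t - s) / 2 ^ m := by have := sub_nonneg.2 hst; positivity
  linarith

lemma dyadicSum_zero (Ξ : ℝ → ℝ → E) (s t : ℝ) : dyadicSum Ξ s t 0 = Ξ s t := by
  simp [dyadicSum, dyadic]

lemma dyadicSum_succ_sub (Ξ : ℝ → ℝ → E) (s t : ℝ) (m : ℕ) :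
    dyadicSum Ξ s t (m + 1) - dyadicSum Ξ s t m =
      dyadicSum (fun u v => Ξ u ((u + v) / 2) + Ξ ((u + v) / 2) v - Ξ u v) s t m := by
  simp only [dyadicSum, pow_succ', sum_range_two_mul, ← sum_sub_distrib]
  refine sum_congr rfl fun i _ => ?_
  rw [dyadic_succ_two_mul, dyadic_succ_two_mul_add_one, show 2 * i + 1 + 1 = 2 * (i + 1) by ring,
    dyadic_succ_two_mul]

lemma norm_dyadicSum_le {D : ℝ → ℝ → E} {s t C γ : ℝ} (hst : s ≤ t)
    (hD : ∀ u v, s ≤ u → u ≤ v → v ≤ t → ‖D u v‖ ≤ C * |v - u| ^ γ) (m : ℕ) :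
    ‖dyadicSum D s t m‖ ≤ C * |t - s| ^ γ * (2 / 2 ^ γ) ^ m := by
  have hterm : ∀ i ∈ range (2 ^ m),
      ‖D (dyadic s t m i) (dyadic s t m (i + 1))‖ ≤ C * (|t - s| / 2 ^ m) ^ γ := by
    intro i hi
    have hi := mem_range.1 hi
    have h := hD _ _ (dyadic_mem hst m hi.le).1 (dyadic_le_succ hst m i)
      (dyadic_mem hst m (Nat.succ_le_of_lt hi)).2
    rwa [dyadic_succ_sub, abs_div, abs_of_pos (by positivity : (0 : ℝ) < 2 ^ m)] at h
  calc ‖dyadicSum D s t m‖ ≤ ∑ i ∈ range (2 ^ m), C * (|t - s| / 2 ^ m) ^ γ :=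
        (norm_sum_le _ _).trans (sum_le_sum hterm)
    _ = C * |t - s| ^ γ * (2 / 2 ^ γ) ^ m := by
        rw [sum_const, card_range, nsmul_eq_mul, Real.div_rpow (abs_nonneg _) (by positivity),
          ← Real.rpow_pow_comm (by norm_num), div_pow]
        push_cast
        field_simp

lemma two_div_two_rpow_lt_one {γ : ℝ} (hγ : 1 < γ) :
    (2 : ℝ) / 2 ^ γ < 1 := by
  rw [div_lt_one (by positivity)]
  simpa using Real.rpow_lt_rpow_of_exponent_lt (by norm_num : (1 : ℝ) < 2) hγ

lemma IsPartitionLimit.tendsto_dyadicSum {Ξ : ℝ → ℝ → E} {s t : ℝ} {I : E}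
    (h : IsPartitionLimit s t Ξ I) (hst : s ≤ t) :
    Tendsto (dyadicSum Ξ s t) atTop (𝓝 I) :=
  h (dyadic s t) (2 ^ ·) (fun m => (t - s) / 2 ^ m) (dyadic_zero s t) (dyadic_two_pow s t)
    (fun m i _ => dyadic_le_succ hst m i) (fun m i _ => (dyadic_succ_sub s t m i).le)
    (tendsto_const_nhds.div_atTop (tendsto_pow_atTop_atTop_of_one_lt one_lt_two))

-- Test the limit over `[r, t]` on the dyadic partition of `[r, s]` followed by that of `[s, t]`.
lemma IsPartitionLimit.tendsto_dyadicSum_sub {Ξ : ℝ → ℝ → E} {r s t : ℝ} {Is It : E}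
    (hs : IsPartitionLimit r s Ξ Is) (ht : IsPartitionLimit r t Ξ It) (hrs : r ≤ s)
    (hst : s ≤ t) : Tendsto (dyadicSum Ξ s t) atTop (𝓝 (It - Is)) := by
  set p : ℕ → ℕ → ℝ := fun m i => if i ≤ 2 ^ m then dyadic r s m i else dyadic s t m (i - 2 ^ m)
  have hp_left : ∀ m i, i ≤ 2 ^ m → p m i = dyadic r s m i := fun m i hi => if_pos hi
  have hp_right : ∀ m j, p m (2 ^ m + j) = dyadic s t m j := by
    intro m j
    rcases j.eq_zero_or_pos with rfl | hj
    · rw [add_zero, hp_left m _ le_rfl, dyadic_two_pow, dyadic_zero]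
    · exact (if_neg (by omega)).trans (by rw [Nat.add_sub_cancel_left])
  have hstep : ∀ m i, i < 2 ^ m + 2 ^ m →
      0 ≤ p m (i + 1) - p m i ∧ p m (i + 1) - p m i ≤ (t - r) / 2 ^ m := by
    intro m i hi
    rcases lt_or_ge i (2 ^ m) with hi' | hi'
    · rw [hp_left m _ hi', hp_left m _ hi'.le, dyadic_succ_sub]
      exact ⟨by have := sub_nonneg.2 hrs; positivity, by gcongr⟩
    · obtain ⟨j, rfl⟩ := Nat.exists_eq_add_of_le hi'
      rw [add_assoc, hp_right, hp_right, dyadic_succ_sub]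
      exact ⟨by have := sub_nonneg.2 hst; positivity, by gcongr⟩
  have hsplit : ∀ m, ∑ i ∈ range (2 ^ m + 2 ^ m), Ξ (p m i) (p m (i + 1)) =
      dyadicSum Ξ r s m + dyadicSum Ξ s t m := by
    intro m
    rw [sum_range_add]
    congr 1
    · exact sum_congr rfl fun i hi => by
        rw [hp_left m i (mem_range.1 hi).le, hp_left m (i + 1) (mem_range.1 hi)]
    · exact sum_congr rfl fun i _ => by rw [add_assoc, hp_right, hp_right]
  have hconcat := ht p (fun m => 2 ^ m + 2 ^ m) (fun m => (t - r) / 2 ^ m)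
    (fun m => by rw [hp_left m 0 (Nat.zero_le _), dyadic_zero])
    (fun m => by rw [hp_right, dyadic_two_pow])
    (fun m i hi => sub_nonneg.1 (hstep m i hi).1) (fun m i hi => (hstep m i hi).2)
    (tendsto_const_nhds.div_atTop (tendsto_pow_atTop_atTop_of_one_lt one_lt_two))
  simp only [hsplit] at hconcat
  exact (hconcat.sub (hs.tendsto_dyadicSum hrs)).congr fun m => add_sub_cancel_left _ _

end Dyadic

section PowBound
variable {E F : Type*} [NormedAddCommGroup E] [NormedAddCommGroup F]

def IsPowBound (T β : ℝ) (f : ℝ → ℝ → E) : Prop :=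
  ∃ C, 0 ≤ C ∧ ∀ s t, 0 ≤ s → s ≤ t → t ≤ T → ‖f s t‖ ≤ C * |t - s| ^ β

def IsCoherent (T γ : ℝ) (Ξ : ℝ → ℝ → E) : Prop :=
  ∃ C, 0 ≤ C ∧ ∀ u v w, 0 ≤ u → u ≤ v → v ≤ w → w ≤ T →
    ‖Ξ u w - Ξ u v - Ξ v w‖ ≤ C * |w - u| ^ γ

variable {T β γ : ℝ} {f g : ℝ → ℝ → E}

lemma IsPowBound.of_le {C : ℝ}
    (h : ∀ s t, 0 ≤ s → s ≤ t → t ≤ T → ‖f s t‖ ≤ C * |t - s| ^ β) : IsPowBound T β f :=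
  ⟨|C|, abs_nonneg C, fun s t hs hst htT =>
    (h s t hs hst htT).trans (by gcongr; exact le_abs_self C)⟩

lemma IsPowBound.congr (hf : IsPowBound T β f)
    (h : ∀ s t, 0 ≤ s → s ≤ t → t ≤ T → f s t = g s t) : IsPowBound T β g :=
  let ⟨C, hC, hf⟩ := hf
  ⟨C, hC, fun s t hs hst htT => h s t hs hst htT ▸ hf s t hs hst htT⟩

lemma IsPowBound.add (hf : IsPowBound T β f) (hg : IsPowBound T β g) :
    IsPowBound T β (fun s t => f s t + g s t) := by
  obtain ⟨C, hC, hf⟩ := hf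
  obtain ⟨D, hD, hg⟩ := hg
  exact ⟨C + D, by positivity, fun s t hs hst htT =>
    (norm_add_le _ _).trans ((add_le_add (hf s t hs hst htT) (hg s t hs hst htT)).trans_eq
      (add_mul _ _ _).symm)⟩

lemma IsPowBound.sub (hf : IsPowBound T β f) (hg : IsPowBound T β g) :
    IsPowBound T β (fun s t => f s t - g s t) := by
  obtain ⟨C, hC, hf⟩ := hf
  obtain ⟨D, hD, hg⟩ := hg
  exact ⟨C + D, by positivity, fun s t hs hst htT =>
    (norm_sub_le _ _).trans ((add_le_add (hf s t hs hst htT) (hg s t hs hst htT)).trans_eq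
      (add_mul _ _ _).symm)⟩

lemma IsPowBound.mono (hf : IsPowBound T γ f) (hβ : 0 ≤ β) (hβγ : β ≤ γ) :
    IsPowBound T β f := by
  obtain ⟨C, hC, hf⟩ := hf
  refine ⟨C * |T| ^ (γ - β), by positivity, fun s t hs hst htT => (hf s t hs hst htT).trans ?_⟩
  have hts : |t - s| ≤ |T| := by
    rw [abs_of_nonneg (by linarith), abs_of_nonneg (by linarith)]; linarith
  calc C * |t - s| ^ γ = C * (|t - s| ^ (γ - β) * |t - s| ^ β) := by
        rw [← Real.rpow_add_of_nonneg (abs_nonneg _) (by linarith) hβ, sub_add_cancel]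
    _ ≤ C * (|T| ^ (γ - β) * |t - s| ^ β) := by gcongr
    _ = C * |T| ^ (γ - β) * |t - s| ^ β := by ring

lemma IsPowBound.clm_apply [NormedSpace ℝ E] [NormedSpace ℝ F] {L : ℝ → E →L[ℝ] F}
    (hL : ∃ B, ∀ s, 0 ≤ s → s ≤ T → ‖L s‖ ≤ B) (hf : IsPowBound T β f) :
    IsPowBound T β (fun s t => L s (f s t)) := by
  obtain ⟨B, hB⟩ := hL
  obtain ⟨C, hC, hf⟩ := hf
  refine ⟨max B 0 * C, by positivity, fun s t hs hst htT => ?_⟩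
  calc ‖L s (f s t)‖ ≤ ‖L s‖ * ‖f s t‖ := (L s).le_opNorm _
    _ ≤ max B 0 * (C * |t - s| ^ β) :=
        mul_le_mul (le_max_of_le_left (hB s hs (hst.trans htT))) (hf s t hs hst htT)
          (norm_nonneg _) (le_max_right _ _)
    _ = max B 0 * C * |t - s| ^ β := by ring

lemma exists_norm_le_of_isPowBound_sub {x : ℝ → E} (hx : IsPowBound T β fun s t => x t - x s)
    (hβ : 0 ≤ β) : ∃ B, ∀ s, 0 ≤ s → s ≤ T → ‖x s‖ ≤ B := by
  obtain ⟨C, hC, hx⟩ := hx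
  refine ⟨‖x 0‖ + C * T ^ β, fun s hs hsT => ?_⟩
  calc ‖x s‖ ≤ ‖x 0‖ + ‖x s - x 0‖ := norm_le_norm_add_norm_sub' _ _
    _ ≤ ‖x 0‖ + C * T ^ β := by
        gcongr
        refine (hx 0 s le_rfl hs hsT).trans ?_
        gcongr
        rwa [sub_zero, abs_of_nonneg hs]

lemma IsPowBound.exists_apply_le [NormedSpace ℝ E] [NormedSpace ℝ F] {A : ℝ → ℝ → E →L[ℝ] F}
    (hA : IsPowBound T β A) (hg : IsPowBound T γ g) (hβ : 0 ≤ β) (hγ : 0 ≤ γ) :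
    ∃ C, 0 ≤ C ∧ ∀ u v w, 0 ≤ u → u ≤ v → v ≤ w → w ≤ T →
      ‖A u v (g v w)‖ ≤ C * |w - u| ^ (β + γ) := by
  obtain ⟨C, hC, hA⟩ := hA
  obtain ⟨D, hD, hg⟩ := hg
  refine ⟨C * D, by positivity, fun u v w hu huv hvw hwT => ?_⟩
  calc ‖A u v (g v w)‖ ≤ ‖A u v‖ * ‖g v w‖ := (A u v).le_opNorm _
    _ ≤ (C * |v - u| ^ β) * (D * |w - v| ^ γ) :=
        mul_le_mul (hA u v hu huv (hvw.trans hwT)) (hg v w (hu.trans huv) hvw hwT)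
          (norm_nonneg _) (by positivity)
    _ ≤ (C * |w - u| ^ β) * (D * |w - u| ^ γ) := by gcongr
    _ = C * D * |w - u| ^ (β + γ) := by
        rw [Real.rpow_add_of_nonneg (abs_nonneg _) hβ hγ]; ring

end PowBound

section Sewing
variable {E : Type*} [NormedAddCommGroup E] {T γ : ℝ}

lemma IsPowBound.tendsto_dyadicSum_zero {D : ℝ → ℝ → E} (hD : IsPowBound T γ D) (hγ : 1 < γ)
    {s t : ℝ} (hs : 0 ≤ s) (hst : s ≤ t) (htT : t ≤ T) :
    Tendsto (dyadicSum D s t) atTop (𝓝 0) := by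
  obtain ⟨C, -, hD⟩ := hD
  refine squeeze_zero_norm (norm_dyadicSum_le hst fun u v hsu huv hvt =>
    hD u v (hs.trans hsu) huv (hvt.trans htT)) ?_
  simpa using (tendsto_pow_atTop_nhds_zero_of_lt_one (by positivity)
    (two_div_two_rpow_lt_one hγ)).const_mul (C * |t - s| ^ γ)

/-- Sewing lemma: passing from the `m`-th to the `(m+1)`-st dyadic partition of `[s, t]` changes
the Riemann sum by `O(|t - s| ^ γ (2 / 2 ^ γ) ^ m)`, a geometric series. -/
lemma IsCoherent.isPowBound_sub {Ξ : ℝ → ℝ → E} {I : ℝ → E} (hΞ : IsCoherent T γ Ξ)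
    (hγ : 1 < γ) (hI : ∀ t ∈ Icc 0 T, IsPartitionLimit 0 t Ξ (I t)) :
    IsPowBound T γ (fun s t => I t - I s - Ξ s t) := by
  obtain ⟨C, hC, hΞ⟩ := hΞ
  have hr := two_div_two_rpow_lt_one hγ
  refine ⟨C / (1 - 2 / 2 ^ γ), div_nonneg hC (sub_nonneg.2 hr.le),
    fun s t hs hst htT => ?_⟩
  have hlim := (hI s ⟨hs, hst.trans htT⟩).tendsto_dyadicSum_sub (hI t ⟨hs.trans hst, htT⟩) hs hst
  have hdist : ∀ m, dist (dyadicSum Ξ s t m) (dyadicSum Ξ s t (m + 1)) ≤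
      C * |t - s| ^ γ * (2 / 2 ^ γ) ^ m := by
    intro m
    rw [dist_comm, dist_eq_norm, dyadicSum_succ_sub]
    refine norm_dyadicSum_le hst (fun u v hsu huv hvt => ?_) m
    have hmid := hΞ u ((u + v) / 2) v (hs.trans hsu) (by linarith) (by linarith) (hvt.trans htT)
    rwa [sub_sub, norm_sub_rev] at hmid
  have := dist_le_of_le_geometric_of_tendsto₀ _ _ hr hdist hlim
  rw [dyadicSum_zero, dist_comm, dist_eq_norm] at this
  exact this.trans_eq (by ring)

end Sewing

section RoughPath
variable {V VV U : Type*} [NormedAddCommGroup V] [NormedSpace ℝ V]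
  [NormedAddCommGroup VV] [NormedSpace ℝ VV] [NormedAddCommGroup U] [NormedSpace ℝ U]
  {tensor : V →L[ℝ] V →L[ℝ] VV} {X : ℝ → V} {XX : ℝ → ℝ → VV} {T α : ℝ}

lemma bracket_add {τ : VV →L[ℝ] VV} {bkt : ℝ → ℝ → VV}
    (chen : ∀ s u t : ℝ, 0 ≤ s → s ≤ u → u ≤ t → t ≤ T →
      XX s t = XX s u + XX u t + tensor (X u - X s) (X t - X u))
    (hτ : ∀ x y, τ (tensor x y) = tensor y x)
    (hbkt : ∀ s t, bkt s t = tensor (X t - X s) (X t - X s) - (XX s t + τ (XX s t)))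
    {u v w : ℝ} (hu : 0 ≤ u) (huv : u ≤ v) (hvw : v ≤ w) (hwT : w ≤ T) :
    bkt u w = bkt u v + bkt v w := by
  rw [hbkt, hbkt, hbkt, chen u v w hu huv hvw hwT,
    show X w - X u = (X v - X u) + (X w - X v) by abel]
  simp only [map_add, add_apply, hτ]
  abel

lemma isPowBound_bracket {τ : VV →L[ℝ] VV} {bkt : ℝ → ℝ → VV}
    (htensor_norm : ∀ x y, ‖tensor x y‖ ≤ ‖x‖ * ‖y‖)
    (hbkt : ∀ s t, bkt s t = tensor (X t - X s) (X t - X s) - (XX s t + τ (XX s t)))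
    (hX : IsPowBound T α fun s t => X t - X s) (hXX : IsPowBound T (2 * α) XX) (hα : 0 ≤ α) :
    IsPowBound T (2 * α) bkt := by
  have hXX' : IsPowBound T (2 * α) fun s t => tensor (X t - X s) (X t - X s) := by
    obtain ⟨C, hC, hX⟩ := hX
    refine ⟨C * C, by positivity, fun s t hs hst htT => ?_⟩
    calc ‖tensor (X t - X s) (X t - X s)‖ ≤ ‖X t - X s‖ * ‖X t - X s‖ := htensor_norm _ _
      _ ≤ (C * |t - s| ^ α) * (C * |t - s| ^ α) :=
          mul_le_mul (hX s t hs hst htT) (hX s t hs hst htT) (norm_nonneg _) (by positivity)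
      _ = C * C * |t - s| ^ (2 * α) := by
          rw [two_mul, Real.rpow_add_of_nonneg (abs_nonneg _) hα hα]; ring
  exact (hXX'.sub (hXX.add (hXX.clm_apply (L := fun _ => τ) ⟨‖τ‖, fun _ _ _ => le_rfl⟩))).congr
    fun s t _ _ _ => (hbkt s t).symm

lemma isCoherent_roughGerm {a : ℝ → V →L[ℝ] U} {A2 : ℝ → VV →L[ℝ] U}
    (chen : ∀ s u t : ℝ, 0 ≤ s → s ≤ u → u ≤ t → t ≤ T →
      XX s t = XX s u + XX u t + tensor (X u - X s) (X t - X u))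
    (hRa : IsPowBound T (2 * α) fun s t => a t - a s - (A2 s).comp (tensor (X t - X s)))
    (hA2 : IsPowBound T α fun s t => A2 t - A2 s)
    (hX : IsPowBound T α fun s t => X t - X s) (hXX : IsPowBound T (2 * α) XX) (hα : 0 ≤ α) :
    IsCoherent T (3 * α) fun u v => a u (X v - X u) + A2 u (XX u v) := by
  obtain ⟨C, hC, hR⟩ := hRa.exists_apply_le hX (by positivity) hα
  obtain ⟨D, hD, hA⟩ := hA2.exists_apply_le hXX hα (by positivity)
  refine ⟨C + D, by positivity, fun u v w hu huv hvw hwT => ?_⟩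
  have hdefect : a u (X w - X u) + A2 u (XX u w) - (a u (X v - X u) + A2 u (XX u v)) -
      (a v (X w - X v) + A2 v (XX v w)) =
      -((a v - a u - (A2 u).comp (tensor (X v - X u))) (X w - X v) +
        (A2 v - A2 u) (XX v w)) := by
    rw [chen u v w hu huv hvw hwT, show X w - X u = (X v - X u) + (X w - X v) by abel]
    simp only [map_add, sub_apply, ContinuousLinearMap.comp_apply]
    abel
  rw [hdefect, norm_neg, add_mul]
  refine (norm_add_le _ _).trans (add_le_add ?_ ?_)
  · simpa only [show 2 * α + α = 3 * α by ring] using hR u v w hu huv hvw hwT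
  · simpa only [show α + 2 * α = 3 * α by ring] using hA u v w hu huv hvw hwT

lemma isCoherent_youngGerm {b : ℝ → VV →L[ℝ] U} {bkt : ℝ → ℝ → VV}
    (hadd : ∀ u v w, 0 ≤ u → u ≤ v → v ≤ w → w ≤ T → bkt u w = bkt u v + bkt v w)
    (hb : IsPowBound T α fun s t => b t - b s) (hbkt : IsPowBound T (2 * α) bkt) (hα : 0 ≤ α) :
    IsCoherent T (3 * α) fun u v => b u (bkt u v) := by
  obtain ⟨C, hC, hB⟩ := hb.exists_apply_le hbkt hα (by positivity)
  refine ⟨C, hC, fun u v w hu huv hvw hwT => ?_⟩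
  have hdefect : b u (bkt u w) - b u (bkt u v) - b v (bkt v w) = -((b v - b u) (bkt v w)) := by
    rw [hadd u v w hu huv hvw hwT, map_add, sub_apply]
    abel
  rw [hdefect, norm_neg, show 3 * α = α + 2 * α by ring]
  exact hB u v w hu huv hvw hwT

end RoughPath

theorem substitution_rule_general {n : ℕ} {U W VV : Type*}
    [NormedAddCommGroup U] [NormedSpace ℝ U]
    [NormedAddCommGroup W] [NormedSpace ℝ W]
    [NormedAddCommGroup VV] [NormedSpace ℝ VV]
    (tensor : EuclideanSpace ℝ (Fin n) →L[ℝ] EuclideanSpace ℝ (Fin n) →L[ℝ] VV)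
    (τ : VV →L[ℝ] VV)
    (htensor_norm : ∀ x y, ‖tensor x y‖ ≤ ‖x‖ * ‖y‖)
    (hτ : ∀ x y, τ (tensor x y) = tensor y x)
    (α T : ℝ) (hα1 : 1/3 < α)
    (X : ℝ → EuclideanSpace ℝ (Fin n)) (XX : ℝ → ℝ → VV) (CX CXX : ℝ)
    (hX : ∀ s t : ℝ, 0 ≤ s → s ≤ t → t ≤ T →
      ‖X t - X s‖ ≤ CX * |t - s| ^ α)
    (hXX : ∀ s t : ℝ, 0 ≤ s → s ≤ t → t ≤ T →
      ‖XX s t‖ ≤ CXX * |t - s| ^ (2*α))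
    (chen : ∀ s u t : ℝ, 0 ≤ s → s ≤ u → u ≤ t → t ≤ T →
      XX s t = XX s u + XX u t + tensor (X u - X s) (X t - X u))
    -- the bracket
    (bkt : ℝ → ℝ → VV)
    (hbkt : ∀ s t : ℝ, bkt s t =
      tensor (X t - X s) (X t - X s) - (XX s t + τ (XX s t)))
    -- (a, a') controlled with values in L(ℝⁿ, U); a' realised on VV by A2
    (a : ℝ → EuclideanSpace ℝ (Fin n) →L[ℝ] U) (A2 : ℝ → VV →L[ℝ] U)
    (CA2 CRa : ℝ)
    (hA2 : ∀ s t : ℝ, 0 ≤ s → s ≤ t → t ≤ T →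
      ‖A2 t - A2 s‖ ≤ CA2 * |t - s| ^ α)
    (hRa : ∀ s t : ℝ, 0 ≤ s → s ≤ t → t ≤ T → ∀ v,
      ‖a t v - a s v - A2 s (tensor (X t - X s) v)‖
        ≤ CRa * |t - s| ^ (2*α) * ‖v‖)
    -- b α-Hölder with values in L(ℝⁿ⊗ℝⁿ, U)
    (b : ℝ → VV →L[ℝ] U) (Cb : ℝ)
    (hb : ∀ s t : ℝ, 0 ≤ s → s ≤ t → t ≤ T → ‖b t - b s‖ ≤ Cb * |t - s| ^ α)
    -- the two integrals defining Z, and Z itself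
    (IA IB : ℝ → U)
    (hIA : ∀ t ∈ Icc (0:ℝ) T, IsPartitionLimit 0 t
      (fun u v => a u (X v - X u) + A2 u (XX u v)) (IA t))
    (hIB : ∀ t ∈ Icc (0:ℝ) T, IsPartitionLimit 0 t
      (fun u v => b u (bkt u v)) (IB t))
    (Z : ℝ → U)
    (hZ : ∀ t ∈ Icc (0:ℝ) T, Z t = Z 0 + IA t + IB t)
    -- the controlled path (c, c') with values in L(U, W)
    (c : ℝ → U →L[ℝ] W)
    (Cc : ℝ)
    (hc : ∀ s t : ℝ, 0 ≤ s → s ≤ t → t ≤ T → ‖c t - c s‖ ≤ Cc * |t - s| ^ α)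
    -- the product `c'·a` realised on VV
    (CM : ℝ → VV →L[ℝ] W) :
    -- (1) a is a Gubinelli derivative of Z, i.e. Z' = a
    (∃ CR : ℝ, ∀ s t : ℝ, 0 ≤ s → s ≤ t → t ≤ T →
      ‖Z t - Z s - a s (X t - X s)‖ ≤ CR * |t - s| ^ (2*α)) ∧
    -- (2) the substitution rule ∫ c d_X Z = ∫ c a dX + ∫ c b d[X]
    (∀ t ∈ Icc (0:ℝ) T, ∀ J1 J2 J3 : W,
      IsPartitionLimit 0 t
        (fun u v => c u (Z v - Z u) + CM u (XX u v)) J1 →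
      IsPartitionLimit 0 t
        (fun u v => c u (a u (X v - X u)) +
          (CM u + (c u).comp (A2 u)) (XX u v)) J2 →
      IsPartitionLimit 0 t (fun u v => c u (b u (bkt u v))) J3 →
      J1 = J2 + J3) := by
  have hα : 0 ≤ α := by linarith
  have h3α : 1 < 3 * α := by linarith
  have hXb : IsPowBound T α fun s t => X t - X s := .of_le hX
  have hXXb : IsPowBound T (2 * α) XX := .of_le hXX
  have hA2b : IsPowBound T α fun s t => A2 t - A2 s := .of_le hA2
  have hbb : IsPowBound T α fun s t => b t - b s := .of_le hb
  have hRab : IsPowBound T (2 * α) fun s t => a t - a s - (A2 s).comp (tensor (X t - X s)) :=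
    ⟨|CRa|, abs_nonneg _, fun s t hs hst htT =>
      ContinuousLinearMap.opNorm_le_bound _ (by positivity) fun v =>
        (hRa s t hs hst htT v).trans (by gcongr; exact le_abs_self _)⟩
  have hbktb := isPowBound_bracket htensor_norm hbkt hXb hXXb hα
  have hIAerr := (isCoherent_roughGerm chen hRab hA2b hXb hXXb hα).isPowBound_sub h3α hIA
  have hIBerr := (isCoherent_youngGerm (fun u v w => bracket_add chen hτ hbkt) hbb hbktb hα
    ).isPowBound_sub h3α hIB
  have hZerr : IsPowBound T (3 * α) fun s t =>
      Z t - Z s - (a s (X t - X s) + A2 s (XX s t)) - b s (bkt s t) :=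
    (hIAerr.add hIBerr).congr fun s t hs hst htT => by
      rw [hZ s ⟨hs, hst.trans htT⟩, hZ t ⟨hs.trans hst, htT⟩]; abel
  refine ⟨?_, fun t ht J1 J2 J3 hJ1 hJ2 hJ3 => ?_⟩
  · obtain ⟨C, -, hC⟩ := ((hZerr.mono (by positivity) (by linarith)).add
      ((hXXb.clm_apply (exists_norm_le_of_isPowBound_sub hA2b hα)).add
        (hbktb.clm_apply (exists_norm_le_of_isPowBound_sub hbb hα)))).congr
      fun s t _ _ _ => show _ = Z t - Z s - a s (X t - X s) by abel
    exact ⟨C, hC⟩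
  · have hsums := (hJ1.tendsto_dyadicSum ht.1).sub
      ((hJ2.tendsto_dyadicSum ht.1).add (hJ3.tendsto_dyadicSum ht.1))
    have hzero := (hZerr.clm_apply (exists_norm_le_of_isPowBound_sub (.of_le hc) hα)
      ).tendsto_dyadicSum_zero h3α le_rfl ht.1 ht.2
    -- The `CM`-terms cancel: the germs differ by `c_u` applied to the remainder of `Z`.
    refine sub_eq_zero.1 (tendsto_nhds_unique (hsums.congr fun m => ?_) hzero)
    simp only [dyadicSum, ← sum_add_distrib, ← sum_sub_distrib]
    refine sum_congr rfl fun i _ => ?_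
    simp only [map_sub, map_add, add_apply, ContinuousLinearMap.comp_apply]
    abel

/-- substitution rule: Let `(X, 𝕏)` be an α-Hölder rough path on
`ℝⁿ` and `Z_t = Z_0 + ∫_0^t a dX + ∫_0^t b d[X]` with `(a, a')` controlled and
`b` α-Hölder. Then `Z' = a` (i.e. `a` is a Gubinelli derivative of `Z`), and
for any controlled path `(c, c')` with values in `L(U, W)`:
`∫_0^t c d_X Z = ∫_0^t c a dX + ∫_0^t c b d[X]`. Tensor products of
`V = ℝⁿ` are modelled by `VV` with bilinear `tensor` and transpose `τ`;
Gubinelli derivatives in `L(V, L(·,·))` are realised on `VV` through the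
canonical identification. -/
theorem substitution_rule {n : ℕ} {U W VV : Type*}
    [NormedAddCommGroup U] [NormedSpace ℝ U]
    [NormedAddCommGroup W] [NormedSpace ℝ W]
    [NormedAddCommGroup VV] [NormedSpace ℝ VV]
    (tensor : EuclideanSpace ℝ (Fin n) →L[ℝ] EuclideanSpace ℝ (Fin n) →L[ℝ] VV)
    (τ : VV →L[ℝ] VV)
    (htensor_norm : ∀ x y, ‖tensor x y‖ ≤ ‖x‖ * ‖y‖)
    (hτ : ∀ x y, τ (tensor x y) = tensor y x)
    (α T : ℝ) (hα1 : 1/3 < α) (hα2 : α ≤ 1/2) (hT : 0 < T)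
    (X : ℝ → EuclideanSpace ℝ (Fin n)) (XX : ℝ → ℝ → VV) (CX CXX : ℝ)
    (hX : ∀ s t : ℝ, 0 ≤ s → s ≤ t → t ≤ T →
      ‖X t - X s‖ ≤ CX * |t - s| ^ α)
    (hXX : ∀ s t : ℝ, 0 ≤ s → s ≤ t → t ≤ T →
      ‖XX s t‖ ≤ CXX * |t - s| ^ (2*α))
    (chen : ∀ s u t : ℝ, 0 ≤ s → s ≤ u → u ≤ t → t ≤ T →
      XX s t = XX s u + XX u t + tensor (X u - X s) (X t - X u))
    -- the bracket
    (bkt : ℝ → ℝ → VV)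
    (hbkt : ∀ s t : ℝ, bkt s t =
      tensor (X t - X s) (X t - X s) - (XX s t + τ (XX s t)))
    -- (a, a') controlled with values in L(ℝⁿ, U); a' realised on VV by A2
    (a : ℝ → EuclideanSpace ℝ (Fin n) →L[ℝ] U) (A2 : ℝ → VV →L[ℝ] U)
    (Ca CA2 CRa : ℝ)
    (ha : ∀ s t : ℝ, 0 ≤ s → s ≤ t → t ≤ T → ‖a t - a s‖ ≤ Ca * |t - s| ^ α)
    (hA2 : ∀ s t : ℝ, 0 ≤ s → s ≤ t → t ≤ T →
      ‖A2 t - A2 s‖ ≤ CA2 * |t - s| ^ α)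
    (hRa : ∀ s t : ℝ, 0 ≤ s → s ≤ t → t ≤ T → ∀ v,
      ‖a t v - a s v - A2 s (tensor (X t - X s) v)‖
        ≤ CRa * |t - s| ^ (2*α) * ‖v‖)
    -- b α-Hölder with values in L(ℝⁿ⊗ℝⁿ, U)
    (b : ℝ → VV →L[ℝ] U) (Cb : ℝ)
    (hb : ∀ s t : ℝ, 0 ≤ s → s ≤ t → t ≤ T → ‖b t - b s‖ ≤ Cb * |t - s| ^ α)
    -- the two integrals defining Z, and Z itself
    (IA IB : ℝ → U) (hIA0 : IA 0 = 0) (hIB0 : IB 0 = 0)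
    (hIA : ∀ t ∈ Icc (0:ℝ) T, IsPartitionLimit 0 t
      (fun u v => a u (X v - X u) + A2 u (XX u v)) (IA t))
    (hIB : ∀ t ∈ Icc (0:ℝ) T, IsPartitionLimit 0 t
      (fun u v => b u (bkt u v)) (IB t))
    (Z : ℝ → U)
    (hZ : ∀ t ∈ Icc (0:ℝ) T, Z t = Z 0 + IA t + IB t)
    -- the controlled path (c, c') with values in L(U, W)
    (c : ℝ → U →L[ℝ] W) (c' : ℝ → EuclideanSpace ℝ (Fin n) →L[ℝ] U →L[ℝ] W)
    (Cc Cc' CRc : ℝ)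
    (hc : ∀ s t : ℝ, 0 ≤ s → s ≤ t → t ≤ T → ‖c t - c s‖ ≤ Cc * |t - s| ^ α)
    (hc' : ∀ s t : ℝ, 0 ≤ s → s ≤ t → t ≤ T →
      ‖c' t - c' s‖ ≤ Cc' * |t - s| ^ α)
    (hRc : ∀ s t : ℝ, 0 ≤ s → s ≤ t → t ≤ T →
      ‖c t - c s - c' s (X t - X s)‖ ≤ CRc * |t - s| ^ (2*α))
    -- the product `c'·a` realised on VV
    (CM : ℝ → VV →L[ℝ] W) (CCM : ℝ)
    (hCM : ∀ u : ℝ, ∀ x y, CM u (tensor x y) = c' u x (a u y))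
    (hCMholder : ∀ s t : ℝ, 0 ≤ s → s ≤ t → t ≤ T →
      ‖CM t - CM s‖ ≤ CCM * |t - s| ^ α) :
    -- (1) a is a Gubinelli derivative of Z, i.e. Z' = a
    (∃ CR : ℝ, ∀ s t : ℝ, 0 ≤ s → s ≤ t → t ≤ T →
      ‖Z t - Z s - a s (X t - X s)‖ ≤ CR * |t - s| ^ (2*α)) ∧
    -- (2) the substitution rule ∫ c d_X Z = ∫ c a dX + ∫ c b d[X]
    (∀ t ∈ Icc (0:ℝ) T, ∀ J1 J2 J3 : W,
      IsPartitionLimit 0 t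
        (fun u v => c u (Z v - Z u) + CM u (XX u v)) J1 →
      IsPartitionLimit 0 t
        (fun u v => c u (a u (X v - X u)) +
          (CM u + (c u).comp (A2 u)) (XX u v)) J2 →
      IsPartitionLimit 0 t (fun u v => c u (b u (bkt u v))) J3 →
      J1 = J2 + J3) :=
  substitution_rule_general tensor τ htensor_norm hτ α T hα1 X XX CX CXX hX hXX chen bkt hbkt a A2
    CA2 CRa hA2 hRa b Cb hb IA IB hIA hIB Z hZ c Cc hc CM
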